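/- arXiv:math/0101100 — 2 statements merged into one kernel-verified Lean document; each statement's English description precedes it below -/
import Mathlib

section
/- Let A be a commutative ℚ-algebra, let u be an invertible element of A, and let L and θ be nilpotent elements of A, say L^K = 0 and θ^K = 0 for a natural number K ≥ 1 (so that u + L is invertible, and for any nilpotent x ∈ A one can define exp(x) := Σ_{j≥0} x^j / j!, a finite sum). Then for every natural number p ≥ 0 one has (u+L)^p · exp(θ·(u+L)^{-1}) = Σ_{k=0}^{p} [ Σ_{a=0}^{k} C(p-a, k-a) · L^{k-a} · θ^a / a! ] · u^{p-k} + θ^{p+1} · Σ_{k=0}^{2K} [ Σ_{b=0}^{k} (-1)^{k-b} · C(k, k-b) · L^{k-b} · θ^b / (p+1+b)! ] · u^{-(k+1)}, where C(·,·) denotes the binomial coefficient; all terms of the second sum with index k > 2K vanish, so the right-hand side is independent of enlarging the truncation bound. -/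
/-!
Expanding `exp (θ / (u + L))`, the terms `θ ^ j / j!` with `j ≤ p` leave `(u + L) ^ (p - j)`, which
the binomial theorem writes in powers of `u`. The terms with `j = p + 1 + b` leave
`θ ^ (p + 1) θ ^ b (u + L) ^ (-(b + 1)) / (p + 1 + b)!`, and since `u + L = u (1 - x)` with
`x = -L / u` nilpotent, `(u + L) ^ (-(b + 1)) = ∑ₘ (-1) ^ m C(b + m, b) L ^ m u ^ (-(b + 1 + m))`:
Pascal's rule gives `(1 - x) ^ (d + 1) ∑_{m < K} C(d + m, d) x ^ m = 1` by induction on `d`.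
Grouping by `k = b + m`, which is `< 2K` as `θ ^ b` and `L ^ m` vanish otherwise, gives the
second sum.
-/
open Finset

theorem one_sub_pow_mul_sum_range_choose_smul_pow {R : Type*} [CommRing R] {x : R} {K : ℕ}
    (hx : x ^ K = 0) (d : ℕ) :
    (1 - x) ^ (d + 1) * ∑ m ∈ range K, (d + m).choose d • x ^ m = 1 := by
  induction d with
  | zero => simpa [hx] using mul_neg_geom_sum x K
  | succ d ih =>
    set g : ℕ → R := fun m => (d + m).choose (d + 1) • x ^ m
    have hshift : ∑ m ∈ range K, g m = x * ∑ m ∈ range K, (d + 1 + m).choose (d + 1) • x ^ m := by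
      have h₁ := sum_range_succ g K
      rw [sum_range_succ', show g 0 = 0 by simp [g], show g K = 0 by simp [g, hx], add_zero,
        add_zero] at h₁
      rw [← h₁, mul_sum]
      refine sum_congr rfl fun m _ => ?_
      simp only [g, mul_smul_comm, pow_succ']
      ring_nf
    have hpascal : ∑ m ∈ range K, (d + 1 + m).choose (d + 1) • x ^ m
        = ∑ m ∈ range K, (d + m).choose d • x ^ m + ∑ m ∈ range K, g m := by
      rw [← sum_add_distrib]
      refine sum_congr rfl fun m _ => ?_
      rw [← add_smul, show d + 1 + m = d + m + 1 by omega, Nat.choose_succ_succ]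
    have hstep : (1 - x) * ∑ m ∈ range K, (d + 1 + m).choose (d + 1) • x ^ m
        = ∑ m ∈ range K, (d + m).choose d • x ^ m := by
      rw [sub_mul, one_mul, ← hshift, hpascal, add_sub_cancel_right]
    rw [pow_succ, mul_assoc, hstep, ih]

theorem inverse_add_pow_succ_eq_sum {R : Type*} [CommRing R] {u L : R} {K : ℕ}
    (hu : IsUnit u) (hL : L ^ K = 0) (n : ℕ) :
    Ring.inverse (u + L) ^ (n + 1)
      = ∑ m ∈ range K,
          ((-1) ^ m * (n + m).choose n : ℤ) • (L ^ m * Ring.inverse u ^ (n + 1 + m)) := by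
  set y := Ring.inverse u
  have huL : IsUnit (u + L) := IsNilpotent.isUnit_add_left_of_commute ⟨K, hL⟩ hu (Commute.all _ _)
  have hfactor : u + L = u * (1 - -(L * y)) := by
    rw [sub_neg_eq_add, mul_add, mul_one, mul_left_comm, Ring.mul_inverse_cancel u hu, mul_one]
  have hx : (-(L * y)) ^ K = 0 := by rw [neg_pow, mul_pow, hL, zero_mul, mul_zero]
  have hsum : ∑ m ∈ range K, ((-1) ^ m * (n + m).choose n : ℤ) • (L ^ m * y ^ (n + 1 + m))
      = y ^ (n + 1) * ∑ m ∈ range K, (n + m).choose n • (-(L * y)) ^ m := by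
    rw [mul_sum]
    refine sum_congr rfl fun m _ => ?_
    rw [zsmul_eq_mul, nsmul_eq_mul]
    push_cast
    ring
  rw [← mul_one (Ring.inverse _ ^ _), Ring.inverse_pow_mul_eq_iff_eq_mul _ _ huL, hsum, hfactor]
  calc
    (1 : R) = (u * y) ^ (n + 1) *
        ((1 - -(L * y)) ^ (n + 1) * ∑ m ∈ range K, (n + m).choose n • (-(L * y)) ^ m) := by
      rw [Ring.mul_inverse_cancel u hu, one_pow, one_mul,
        one_sub_pow_mul_sum_range_choose_smul_pow hx]
    _ = _ := by rw [mul_pow, mul_pow, mul_mul_mul_comm]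

theorem pow_mul_inverse_pow_of_le {M₀ : Type*} [CommMonoidWithZero M₀] {x : M₀} (hx : IsUnit x)
    {j p : ℕ} (h : j ≤ p) : x ^ p * Ring.inverse x ^ j = x ^ (p - j) := by
  obtain ⟨n, rfl⟩ := Nat.exists_eq_add_of_le h
  rw [pow_add, mul_right_comm, ← mul_pow, Ring.mul_inverse_cancel x hx, one_pow, one_mul,
    Nat.add_sub_cancel_left]

theorem pow_mul_inverse_pow_add {M₀ : Type*} [CommMonoidWithZero M₀] {x : M₀} (hx : IsUnit x)
    (p n : ℕ) : x ^ p * Ring.inverse x ^ (p + n) = Ring.inverse x ^ n := by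
  rw [pow_add, ← mul_assoc, ← mul_pow, Ring.mul_inverse_cancel x hx, one_pow, one_mul]

theorem sum_range_sum_range_eq_sum_range_sum_diag {M : Type*} [AddCommMonoid M] {K N : ℕ}
    (hN : 2 * K ≤ N + 1) (f : ℕ → ℕ → M) (hf₁ : ∀ b m, K ≤ b → f b m = 0)
    (hf₂ : ∀ b m, K ≤ m → f b m = 0) :
    ∑ b ∈ range K, ∑ m ∈ range K, f b m = ∑ k ∈ range N, ∑ b ∈ range (k + 1), f b (k - b) :=
  calc
    ∑ b ∈ range K, ∑ m ∈ range K, f b m = ∑ b ∈ range K, ∑ m ∈ range (N - b), f b m :=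
      sum_congr rfl fun b hb => sum_subset (range_subset_range.2 (by grind))
        fun m _ hm => hf₂ b m (by simpa using hm)
    _ = ∑ b ∈ range N, ∑ m ∈ range (N - b), f b m :=
      sum_subset (range_subset_range.2 (by omega))
        fun b _ hb => sum_eq_zero fun m _ => hf₁ b m (by simpa using hb)
    _ = _ := (sum_range_diag_flip N f).symm

theorem sum_range_smul_mul_add_pow_sub {S A : Type*} [CommSemiring S] [CommSemiring A]
    [Algebra S A] (c : ℕ → S) (u L θ : A) (p : ℕ) :
    ∑ j ∈ range (p + 1), c j • (θ ^ j * (u + L) ^ (p - j))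
      = ∑ k ∈ range (p + 1),
          (∑ a ∈ range (k + 1), ((p - a).choose (k - a) * c a) • (L ^ (k - a) * θ ^ a))
            * u ^ (p - k) :=
  calc
    ∑ j ∈ range (p + 1), c j • (θ ^ j * (u + L) ^ (p - j))
        = ∑ j ∈ range (p + 1), ∑ m ∈ range (p + 1 - j),
            ((p - j).choose m * c j) • (L ^ m * θ ^ j * u ^ (p - j - m)) := by
      refine sum_congr rfl fun j hj => ?_
      rw [add_comm u L, add_pow, mul_sum, smul_sum, show p + 1 - j = p - j + 1 by grind]
      refine sum_congr rfl fun m _ => ?_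
      simp only [Algebra.smul_def, map_mul, map_natCast]
      ring
    _ = ∑ k ∈ range (p + 1), ∑ a ∈ range (k + 1),
          ((p - a).choose (k - a) * c a) • (L ^ (k - a) * θ ^ a * u ^ (p - a - (k - a))) :=
      (sum_range_diag_flip (p + 1) fun a m =>
        ((p - a).choose m * c a) • (L ^ m * θ ^ a * u ^ (p - a - m))).symm
    _ = _ := by
      refine sum_congr rfl fun k _ => ?_
      rw [sum_mul]
      refine sum_congr rfl fun a ha => ?_
      rw [show p - a - (k - a) = p - k by grind, smul_mul_assoc]

theorem sum_range_smul_mul_inverse_add_pow_succ {S A : Type*} [CommRing S] [CommRing A]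
    [Algebra S A] (c : ℕ → S) {u L θ : A} {K : ℕ} (hu : IsUnit u) (hL : L ^ K = 0)
    (hθ : θ ^ K = 0) :
    ∑ b ∈ range K, c b • (θ ^ b * Ring.inverse (u + L) ^ (b + 1))
      = ∑ k ∈ range (2 * K + 1),
          (∑ b ∈ range (k + 1), ((-1) ^ (k - b) * k.choose (k - b) * c b) • (L ^ (k - b) * θ ^ b))
            * Ring.inverse u ^ (k + 1) :=
  calc
    ∑ b ∈ range K, c b • (θ ^ b * Ring.inverse (u + L) ^ (b + 1))
        = ∑ b ∈ range K, ∑ m ∈ range K,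
            ((-1) ^ m * (b + m).choose b * c b) • (L ^ m * θ ^ b)
              * Ring.inverse u ^ (b + m + 1) := by
      refine sum_congr rfl fun b _ => ?_
      rw [inverse_add_pow_succ_eq_sum hu hL, mul_sum, smul_sum]
      refine sum_congr rfl fun m _ => ?_
      simp only [Algebra.smul_def, map_mul, map_natCast, map_pow, map_neg, map_one]
      ring
    _ = ∑ k ∈ range (2 * K + 1), ∑ b ∈ range (k + 1),
          ((-1) ^ (k - b) * (b + (k - b)).choose b * c b) • (L ^ (k - b) * θ ^ b)
            * Ring.inverse u ^ (b + (k - b) + 1) :=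
      sum_range_sum_range_eq_sum_range_sum_diag (by omega) _
        (fun b m hb => by simp [pow_eq_zero_of_le hb hθ])
        (fun b m hm => by simp [pow_eq_zero_of_le hm hL])
    _ = _ := by
      refine sum_congr rfl fun k _ => ?_
      rw [sum_mul]
      refine sum_congr rfl fun b hb => ?_
      have hbk : b ≤ k := Nat.lt_succ_iff.1 (mem_range.1 hb)
      rw [Nat.add_sub_cancel' hbk, Nat.choose_symm hbk]

theorem higher_genus_toric_lemma46_first_general
    {A : Type*} [CommRing A] [Algebra ℚ A]
    (K : ℕ) (u L θ : A) (hu : IsUnit u)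
    (hL : L ^ K = 0) (hθ : θ ^ K = 0) (p : ℕ) :
    (u + L) ^ p *
      (∑ j ∈ Finset.range K, ((j.factorial : ℚ)⁻¹) • (θ * Ring.inverse (u + L)) ^ j)
    =
    (∑ k ∈ Finset.range (p + 1),
        (∑ a ∈ Finset.range (k + 1),
            (((p - a).choose (k - a) : ℚ) / (a.factorial : ℚ)) • (L ^ (k - a) * θ ^ a))
          * u ^ (p - k))
    +
    θ ^ (p + 1) *
      (∑ k ∈ Finset.range (2 * K + 1),
        (∑ b ∈ Finset.range (k + 1),
            (((-1 : ℚ) ^ (k - b) * (k.choose (k - b) : ℚ)) / ((p + 1 + b).factorial : ℚ)) •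
              (L ^ (k - b) * θ ^ b))
          * (Ring.inverse u) ^ (k + 1)) := by
  have huL : IsUnit (u + L) := IsNilpotent.isUnit_add_left_of_commute ⟨K, hL⟩ hu (Commute.all _ _)
  simp only [div_eq_mul_inv]
  rw [← sum_range_smul_mul_add_pow_sub, ← sum_range_smul_mul_inverse_add_pow_succ _ hu hL hθ]
  calc
    (u + L) ^ p * ∑ j ∈ range K, (j.factorial : ℚ)⁻¹ • (θ * Ring.inverse (u + L)) ^ j
        = ∑ j ∈ range (p + 1 + K),
            (j.factorial : ℚ)⁻¹ • (θ ^ j * ((u + L) ^ p * Ring.inverse (u + L) ^ j)) := by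
      rw [mul_sum]
      refine sum_subset_zero_on_sdiff (range_subset_range.2 (by omega)) (fun j hj => ?_)
        fun j _ => by rw [mul_smul_comm, mul_pow, mul_left_comm]
      rw [pow_eq_zero_of_le (by grind) hθ, zero_mul, smul_zero]
    _ = _ := by
      rw [sum_range_add, mul_sum]
      congr 1
      · refine sum_congr rfl fun j hj => ?_
        rw [pow_mul_inverse_pow_of_le huL (Nat.lt_succ_iff.1 (mem_range.1 hj))]
      · refine sum_congr rfl fun b _ => ?_
        rw [show p + 1 + b = p + (b + 1) by omega, pow_mul_inverse_pow_add huL, mul_smul_comm]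
        congr 1
        ring

theorem higher_genus_toric_lemma46_first
    {A : Type*} [CommRing A] [Algebra ℚ A]
    (K : ℕ) (hK : 1 ≤ K) (u L θ : A) (hu : IsUnit u)
    (hL : L ^ K = 0) (hθ : θ ^ K = 0) (p : ℕ) :
    (u + L) ^ p *
      (∑ j ∈ Finset.range K, ((j.factorial : ℚ)⁻¹) • (θ * Ring.inverse (u + L)) ^ j)
    =
    (∑ k ∈ Finset.range (p + 1),
        (∑ a ∈ Finset.range (k + 1),
            (((p - a).choose (k - a) : ℚ) / (a.factorial : ℚ)) • (L ^ (k - a) * θ ^ a))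
          * u ^ (p - k))
    +
    θ ^ (p + 1) *
      (∑ k ∈ Finset.range (2 * K + 1),
        (∑ b ∈ Finset.range (k + 1),
            (((-1 : ℚ) ^ (k - b) * (k.choose (k - b) : ℚ)) / ((p + 1 + b).factorial : ℚ)) •
              (L ^ (k - b) * θ ^ b))
          * (Ring.inverse u) ^ (k + 1)) :=
  higher_genus_toric_lemma46_first_general K u L θ hu hL hθ p
end

section
/- Let l, n ≥ 1 and r = l + n, let (a^λ_ν), λ ∈ {1,…,l}, ν ∈ {1,…,n}, be a matrix of integers, and let N_1, …, N_r be positive integers. Let the real torus T_ℝ = (S¹)^l (the group of l-tuples of complex numbers of modulus 1) act on ℂ^r by t · z = (χ_1(t) z_1, …, χ_r(t) z_r) and on ℂ^{N_1} × ⋯ × ℂ^{N_r} by t · w = (χ_1(t) w^1, …, χ_r(t) w^r), where the characters are χ_λ(t) = t_λ for λ ∈ {1,…,l} and χ_{l+ν}(t) = Π_{λ=1}^{l} t_λ^{a^λ_ν} for ν ∈ {1,…,n}. Define m : ℂ^r → ℝ^l by m(z)_λ = (1/2)(|z_λ|² + Σ_{ν=1}^{n} a^λ_ν |z_{l+ν}|²)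 and 𝓜 : ℂ^{N_1} × ⋯ × ℂ^{N_r} → ℝ^l by 𝓜(w)_λ = (1/2)(‖w^λ‖² + Σ_{ν=1}^{n} a^λ_ν ‖w^{l+ν}‖²). Then for every a ∈ ℝ^l: if T_ℝ acts freely on m^{-1}(a) (i.e., for all z ∈ m^{-1}(a) and t ∈ T_ℝ, t · z = z implies t = 1), then T_ℝ acts freely on 𝓜^{-1}(a). -/
/-- The characters of the torus action: `χ_λ(t) = t_λ` on the first `l`
coordinates and `χ_{l+ν}(t) = ∏_λ t_λ^{a^λ_ν}` on the last `n` ones. -/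
noncomputable def toricChar (l n : ℕ) (a : Fin l → Fin n → ℤ)
    (t : Fin l → ℂ) : Fin l ⊕ Fin n → ℂ :=
  Sum.elim t (fun ν => ∏ lam : Fin l, t lam ^ a lam ν)

/-- The moment map `m : ℂ^{l+n} → ℝ^l`,
`m(z)_λ = (1/2)(|z_λ|² + ∑_ν a^λ_ν |z_{l+ν}|²)`. -/
noncomputable def momentSmall (l n : ℕ) (a : Fin l → Fin n → ℤ)
    (z : Fin l ⊕ Fin n → ℂ) : Fin l → ℝ :=
  fun lam => (1 / 2 : ℝ) *
    ((‖z (Sum.inl lam)‖) ^ 2 +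
      ∑ ν : Fin n, (a lam ν : ℝ) * (‖z (Sum.inr ν)‖) ^ 2)

/-- The moment map `𝓜 : ℂ^{N_1} × ⋯ × ℂ^{N_r} → ℝ^l`,
`𝓜(w)_λ = (1/2)(‖w^λ‖² + ∑_ν a^λ_ν ‖w^{l+ν}‖²)`, where `w^ρ ∈ ℂ^{N_ρ}` is the
`ρ`-th block of `w` and `‖·‖` is the standard Hermitian norm. -/
noncomputable def momentBig (l n : ℕ) (a : Fin l → Fin n → ℤ)
    (N : Fin l ⊕ Fin n → ℕ)
    (w : (ρ : Fin l ⊕ Fin n) → EuclideanSpace ℂ (Fin (N ρ))) : Fin l → ℝ :=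
  fun lam => (1 / 2 : ℝ) *
    (‖w (Sum.inl lam)‖ ^ 2 + ∑ ν : Fin n, (a lam ν : ℝ) * ‖w (Sum.inr ν)‖ ^ 2)

theorem mul_norm_eq_norm_of_smul_eq_self {𝕜 E : Type*} [RCLike 𝕜] [NormedAddCommGroup E]
    [NormedSpace 𝕜 E] {c : 𝕜} {v : E} (h : c • v = v) : c * (‖v‖ : 𝕜) = ‖v‖ := by
  rcases eq_or_ne v 0 with rfl | hv
  · simp
  · have hc : c = 1 := smul_left_injective 𝕜 hv (by simpa using h)
    rw [hc, one_mul]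

theorem momentSmall_norm_eq_momentBig (l n : ℕ) (a : Fin l → Fin n → ℤ)
    (N : Fin l ⊕ Fin n → ℕ) (w : (ρ : Fin l ⊕ Fin n) → EuclideanSpace ℂ (Fin (N ρ))) :
    momentSmall l n a (fun ρ => (‖w ρ‖ : ℂ)) = momentBig l n a N w := by
  funext lam
  simp only [momentSmall, momentBig, Complex.norm_real, norm_norm]

theorem higher_genus_toric_free_action_general
    (l n : ℕ) (a : Fin l → Fin n → ℤ)
    (N : Fin l ⊕ Fin n → ℕ) (avec : Fin l → ℝ)
    (hfree : ∀ z : Fin l ⊕ Fin n → ℂ, momentSmall l n a z = avec →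
      ∀ t : Fin l → ℂ, (∀ lam, ‖t lam‖ = 1) →
        (∀ ρ, toricChar l n a t ρ * z ρ = z ρ) → ∀ lam, t lam = 1) :
    ∀ w : (ρ : Fin l ⊕ Fin n) → EuclideanSpace ℂ (Fin (N ρ)),
      momentBig l n a N w = avec →
      ∀ t : Fin l → ℂ, (∀ lam, ‖t lam‖ = 1) →
        (∀ ρ, toricChar l n a t ρ • w ρ = w ρ) → ∀ lam, t lam = 1 := by
  intro w hw t ht hfix
  exact hfree (fun ρ => (‖w ρ‖ : ℂ)) ((momentSmall_norm_eq_momentBig l n a N w).trans hw)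
    t ht fun ρ => mul_norm_eq_norm_of_smul_eq_self (hfix ρ)

/-- If the real torus `(S¹)^l` (tuples `t` with `|t_λ| = 1`) acts freely on
`m⁻¹(a)` via `t · z = (χ_ρ(t) z_ρ)_ρ`, then it acts freely on `𝓜⁻¹(a)` via
`t · w = (χ_ρ(t) w^ρ)_ρ`. -/
theorem higher_genus_toric_free_action
    (l n : ℕ) (hl : 1 ≤ l) (hn : 1 ≤ n) (a : Fin l → Fin n → ℤ)
    (N : Fin l ⊕ Fin n → ℕ) (hN : ∀ ρ, 0 < N ρ) (avec : Fin l → ℝ)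
    (hfree : ∀ z : Fin l ⊕ Fin n → ℂ, momentSmall l n a z = avec →
      ∀ t : Fin l → ℂ, (∀ lam, ‖t lam‖ = 1) →
        (∀ ρ, toricChar l n a t ρ * z ρ = z ρ) → ∀ lam, t lam = 1) :
    ∀ w : (ρ : Fin l ⊕ Fin n) → EuclideanSpace ℂ (Fin (N ρ)),
      momentBig l n a N w = avec →
      ∀ t : Fin l → ℂ, (∀ lam, ‖t lam‖ = 1) →
        (∀ ρ, toricChar l n a t ρ • w ρ = w ρ) → ∀ lam, t lam = 1 :=
  higher_genus_toric_free_action_general l n a N avec hfree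
end
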